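/- In the shot-noise Cox process setup, assume Φ is a simple point process with Φ(X) < ∞ almost surely, fix k ≥ 1, and assume: (a) almost surely E[1(Φ(X) = k) · Φ^{(k)}(A) | Λ] = exp(−∫_X T_Λ dμ) · ∫_A ∏_{j=1}^k T_Λ(x_j) μ^{⊗k}(dx) for every measurable A ⊆ X^k (the Janossy formula of a Poisson process with intensity T_Λ·μ, applied conditionally); and (b) Λ satisfies the Poisson exponential-moment formula with intensity ν. Then for every measurable A ⊆ X^k: E[1(Φ(X) = k) · Φ^{(k)}(A)] = ∫_A j_k(x₁,…,x_k) μ^{⊗k}(dx), where the Janossy density is j_k(x₁,…,x_k) = exp(−∫_{X×(0,∞)} (1 − e^{−γ}) ν(dθ, dγ)) · Σ_{𝒫} ∏_{J∈𝒫} ∫_{X×(0,∞)} e^{−γ} γ^{|J|} ∏_{j∈J} κ(x_j; θ) ν(dθ, dγ). -/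

import Mathlib

/-! Conditioning on `Λ`, formula (a) turns the Janossy measure of `A` into the `P`-expectation of
`e^{-∫ T_Λ dμ} ∫_A ∏ⱼ T_Λ(xⱼ) dμ^{⊗k}`, and `∫ T_Λ dμ = ∫ γ dΛ` because `κ(·; θ)` is a probability
density. After exchanging the `ω`- and `x`-integrals, the integrand at a fixed tuple `x` is the left
side of (b) with `h = γ` and `c_j = γ κ(xⱼ; ·)`.
The exchange needs joint measurability in `(ω, x)`, which holds for s-finite kernels. The Laplace
functional makes `Λ ω` a.s. finite on the spanning sets of `ν`, and there `Λ` agrees with an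
s-finite kernel, built by cutting `Λ ω` into pieces by the integer part of their mass. -/

open MeasureTheory

/-- `expNeg t = e^{-t}` for `t ∈ [0,∞]`, with `expNeg ∞ = 0`. -/
noncomputable def expNeg (t : ENNReal) : ENNReal :=
  if t = ⊤ then 0 else ENNReal.ofReal (Real.exp (-t.toReal))

/-- The set `D_k` of `k`-tuples with pairwise distinct coordinates. -/
def distinctTuples (X : Type*) (k : ℕ) : Set (Fin k → X) :=
  {t : Fin k → X | Function.Injective t}

/-- A random measure `Λ` satisfies the Poisson exponential-moment formula with
intensity `ν`. -/
def PoissonExpMoment {Ω Y : Type*} [MeasurableSpace Ω] [MeasurableSpace Y]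
    (P : Measure Ω) (Λ : Ω → Measure Y) (ν : Measure Y) : Prop :=
  ∀ (m : ℕ), 1 ≤ m → ∀ h : Y → ENNReal, Measurable h →
    ∀ c : Fin m → Y → ENNReal, (∀ j, Measurable (c j)) →
    ∫⁻ ω, expNeg (∫⁻ z, h z ∂(Λ ω)) * ∏ j, ∫⁻ z, c j z ∂(Λ ω) ∂P
      = expNeg (∫⁻ z, (1 - expNeg (h z)) ∂ν)
        * ∑ pt : Finpartition (Finset.univ : Finset (Fin m)),
            ∏ J ∈ pt.parts, ∫⁻ z, expNeg (h z) * ∏ j ∈ J, c j z ∂ν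

open Filter Topology ProbabilityTheory

lemma expNeg_top : expNeg ⊤ = 0 := if_pos rfl

lemma expNeg_zero : expNeg 0 = 1 := by simp [expNeg]

lemma measurable_expNeg : Measurable expNeg :=
  Measurable.ite (measurableSet_singleton ⊤) measurable_const
    (ENNReal.measurable_ofReal.comp (Real.measurable_exp.comp ENNReal.measurable_toReal.neg))

lemma expNeg_le_one (t : ENNReal) : expNeg t ≤ 1 := by
  unfold expNeg
  split_ifs
  · exact zero_le_one
  · exact ENNReal.ofReal_le_one.2 (Real.exp_le_one_iff.2 (neg_nonpos.2 ENNReal.toReal_nonneg))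

lemma expNeg_antitone : Antitone expNeg := by
  intro s t hst
  by_cases ht : t = ⊤
  · simp [ht, expNeg_top]
  have hs : s ≠ ⊤ := ne_top_of_le_ne_top ht hst
  simp only [expNeg, if_neg ht, if_neg hs]
  gcongr

lemma one_sub_expNeg_le (t : ENNReal) : 1 - expNeg t ≤ t := by
  by_cases ht : t = ⊤
  · simp [ht]
  rw [expNeg, if_neg ht, ← ENNReal.ofReal_one, ← ENNReal.ofReal_sub _ (Real.exp_nonneg _)]
  refine (ENNReal.ofReal_le_ofReal ?_).trans ENNReal.ofReal_toReal_le
  linarith [Real.add_one_le_exp (-t.toReal)]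

lemma tendsto_expNeg_nhds_zero : Tendsto expNeg (𝓝 0) (𝓝 1) := by
  have hfin : expNeg =ᶠ[𝓝 0] fun t => ENNReal.ofReal (Real.exp (-t.toReal)) :=
    Filter.mem_of_superset (ENNReal.isOpen_ne_top.mem_nhds ENNReal.zero_ne_top)
      fun t ht => if_neg ht
  rw [tendsto_congr' hfin, ← ENNReal.ofReal_one, ← Real.exp_zero, ← neg_zero,
    ← ENNReal.toReal_zero]
  exact ENNReal.tendsto_ofReal
    (Real.continuous_exp.continuousAt.tendsto.comp
      (ENNReal.tendsto_toReal ENNReal.zero_ne_top).neg)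

section AeFinite

variable {Ω Z : Type*} [MeasurableSpace Ω] [MeasurableSpace Z] {P : Measure Ω}

lemma ae_ne_top_of_expNeg_le_lintegral [IsProbabilityMeasure P] {Y : Ω → ENNReal}
    (hY : Measurable Y) {a : ENNReal} (ha : a ≠ ⊤)
    (hlap : ∀ c : ENNReal, c ≠ 0 → expNeg (c * a) ≤ ∫⁻ ω, expNeg (c * Y ω) ∂P) :
    ∀ᵐ ω ∂P, Y ω ≠ ⊤ := by
  have hfin : MeasurableSet {ω | Y ω ≠ ⊤} := (hY (measurableSet_singleton ⊤)).compl
  have hbound : ∀ n : ℕ, expNeg ((n : ENNReal)⁻¹ * a) ≤ P {ω | Y ω ≠ ⊤} := by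
    intro n
    refine (hlap _ (ENNReal.inv_ne_zero.2 (ENNReal.natCast_ne_top n))).trans ?_
    rw [← lintegral_indicator_one hfin]
    refine lintegral_mono fun ω => ?_
    by_cases hω : Y ω = ⊤
    · simp [hω, expNeg_top]
    · simpa [hω] using expNeg_le_one _
  have hlim : Tendsto (fun n : ℕ => expNeg ((n : ENNReal)⁻¹ * a)) atTop (𝓝 1) := by
    refine tendsto_expNeg_nhds_zero.comp ?_
    simpa using ENNReal.Tendsto.mul_const ENNReal.tendsto_inv_nat_nhds_zero (Or.inr ha)
  rw [ae_iff_measure_eq hfin.nullMeasurableSet, measure_univ]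
  exact le_antisymm prob_le_one (le_of_tendsto' hlim hbound)

lemma ae_measure_ne_top_of_laplace [IsProbabilityMeasure P] {Λ : Ω → Measure Z}
    (hΛmeas : Measurable Λ) {ν : Measure Z}
    (hΛ : ∀ h : Z → ENNReal, Measurable h →
      ∫⁻ ω, expNeg (∫⁻ z, h z ∂(Λ ω)) ∂P = expNeg (∫⁻ z, (1 - expNeg (h z)) ∂ν))
    {S : Set Z} (hS : MeasurableSet S) (hνS : ν S ≠ ⊤) :
    ∀ᵐ ω ∂P, Λ ω S ≠ ⊤ := by
  refine ae_ne_top_of_expNeg_le_lintegral ((Measure.measurable_coe hS).comp hΛmeas) hνS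
    fun c _ => ?_
  have hlap := hΛ (S.indicator fun _ => c) (measurable_const.indicator hS)
  have hcomp : (fun z => 1 - expNeg (S.indicator (fun _ => c) z))
      = S.indicator fun _ => 1 - expNeg c :=
    (Set.indicator_comp_of_zero (g := fun t => 1 - expNeg t) (by simp [expNeg_zero])).symm
  simp only [lintegral_indicator_const hS, hcomp] at hlap
  rw [hlap]
  exact expNeg_antitone (mul_le_mul_left (one_sub_expNeg_le c) _)

end AeFinite

section SFiniteVersion

variable {Ω Z : Type*} [MeasurableSpace Ω] [MeasurableSpace Z] {Λ : Ω → Measure Z}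

noncomputable def levelRestrict (hΛ : Measurable Λ) {D : Set Z} (hD : MeasurableSet D) (m : ℕ) :
    Kernel Ω Z :=
  Kernel.piecewise (s := {ω | Λ ω D ∈ Set.Ico (m : ENNReal) (m + 1)})
    ((Measure.measurable_coe hD).comp hΛ measurableSet_Ico)
    ((⟨Λ, hΛ⟩ : Kernel Ω Z).restrict hD) 0

instance (hΛ : Measurable Λ) {D : Set Z} (hD : MeasurableSet D) (m : ℕ) :
    IsFiniteKernel (levelRestrict hΛ hD m) := by
  refine ⟨⟨m + 1, by simp, fun ω => ?_⟩⟩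
  rw [levelRestrict, Kernel.piecewise_apply]
  split_ifs with h
  · simpa [Kernel.restrict_apply] using h.2.le
  · simp

lemma sum_levelRestrict_apply (hΛ : Measurable Λ) {D : Set Z} (hD : MeasurableSet D) {ω : Ω}
    (hω : Λ ω D ≠ ⊤) : Kernel.sum (levelRestrict hΛ hD) ω = (Λ ω).restrict D := by
  have hlevel : ∀ m : ℕ, Λ ω D ∈ Set.Ico (m : ENNReal) (m + 1) ↔ m = ⌊(Λ ω D).toNNReal⌋₊ := by
    intro m
    rw [eq_comm, Nat.floor_eq_iff zero_le, ← ENNReal.coe_toNNReal hω, Set.mem_Ico]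
    norm_cast
  ext s hs
  simp only [Kernel.sum_apply, Measure.sum_apply _ hs, levelRestrict, Kernel.piecewise_apply,
    Set.mem_ofPred_eq, hlevel, Kernel.restrict_apply]
  rw [tsum_eq_single ⌊(Λ ω D).toNNReal⌋₊ fun m hm => by simp [hm], if_pos rfl]
  rfl

noncomputable def spanningPart (hΛ : Measurable Λ) (ν : Measure Z) [SigmaFinite ν] :
    Kernel Ω Z :=
  Kernel.sum fun n =>
    Kernel.sum (levelRestrict hΛ (MeasurableSet.disjointed (measurableSet_spanningSets ν) n))

instance (hΛ : Measurable Λ) (ν : Measure Z) [SigmaFinite ν] :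
    IsSFiniteKernel (spanningPart hΛ ν) := by
  unfold spanningPart; infer_instance

lemma spanningPart_apply (hΛ : Measurable Λ) (ν : Measure Z) [SigmaFinite ν] {ω : Ω}
    (hω : ∀ n, Λ ω (spanningSets ν n) ≠ ⊤) : spanningPart hΛ ν ω = Λ ω := by
  rw [spanningPart, Kernel.sum_apply]
  conv_rhs => rw [← sum_restrict_disjointed_spanningSets (Λ ω) ν]
  congr 1
  funext n
  exact sum_levelRestrict_apply hΛ _
    (ne_top_of_le_ne_top (hω n) (measure_mono (disjointed_subset _ n)))

end SFiniteVersion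

lemma lintegral_lintegral_mul_of_lintegral_eq_one {X W : Type*} [MeasurableSpace X]
    [MeasurableSpace W]
    {μ : Measure X} [SFinite μ] {L : Measure (X × W)} [SFinite L] {κ : X → X → ENNReal}
    (hκ : Measurable (Function.uncurry κ)) (hκ1 : ∀ θ : X, ∫⁻ y, κ y θ ∂μ = 1)
    {g : X × W → ENNReal} (hg : Measurable g) :
    ∫⁻ y, ∫⁻ z, g z * κ y z.1 ∂L ∂μ = ∫⁻ z, g z ∂L := by
  rw [lintegral_lintegral_swap (by fun_prop)]
  refine lintegral_congr fun z => ?_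
  rw [lintegral_const_mul _ (by fun_prop), hκ1, mul_one]

lemma measurable_expNeg_mul_prod_lintegral {Ω X Z : Type*} [MeasurableSpace Ω]
    [MeasurableSpace X] [MeasurableSpace Z] (K : Kernel Ω Z) [IsSFiniteKernel K]
    {g : Z → ENNReal} (hg : Measurable g) {c : X → Z → ENNReal}
    (hc : Measurable (Function.uncurry c)) (k : ℕ) :
    Measurable (Function.uncurry fun ω (t : Fin k → X) =>
      expNeg (∫⁻ z, g z ∂(K ω)) * ∏ j, ∫⁻ z, c (t j) z ∂(K ω)) := by
  have hfactor : ∀ j, Measurable fun p : Ω × (Fin k → X) =>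
      ∫⁻ z, c (p.2 j) z ∂(K.prodMkRight (Fin k → X) p) := fun j =>
    Measurable.lintegral_kernel_prod_right'
      (f := fun q : (Ω × (Fin k → X)) × Z => c (q.1.2 j) q.2) (by fun_prop)
  exact ((measurable_expNeg.comp hg.lintegral_kernel).comp measurable_fst).mul
    (Finset.measurable_prod _ fun j _ => hfactor j)

theorem sncp_janossy_density_general
    {Ω X : Type*} [MeasurableSpace Ω] [MeasurableSpace X]
    (P : Measure Ω) [IsProbabilityMeasure P]
    (μ : Measure X) [SigmaFinite μ]
    (ν : Measure (X × NNReal)) [SigmaFinite ν]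
    (κ : X → X → ENNReal) (hκ : Measurable (Function.uncurry κ))
    (hκ1 : ∀ θ : X, ∫⁻ y, κ y θ ∂μ = 1)
    (Λ : Ω → Measure (X × NNReal)) (hΛmeas : Measurable Λ)
    (hΛ : ∀ h : X × NNReal → ENNReal, Measurable h →
      ∫⁻ ω, expNeg (∫⁻ z, h z ∂(Λ ω)) ∂P = expNeg (∫⁻ z, (1 - expNeg (h z)) ∂ν))
    (Φ : Ω → Measure X)
    (k : ℕ) (hk : 1 ≤ k)
    -- (a) conditional Janossy formula of a Poisson process with intensity `T_Λ·μ`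
    (ha : ∀ A : Set (Fin k → X), MeasurableSet A →
      ∀ G : Measure (X × NNReal) → ENNReal, Measurable G →
      ∫⁻ ω, (if Φ ω Set.univ = (k : ENNReal)
          then ((Measure.pi fun _ : Fin k => Φ ω).restrict (distinctTuples X k)) A
          else 0) * G (Λ ω) ∂P
        = ∫⁻ ω, (expNeg (∫⁻ y, (∫⁻ z, (z.2 : ENNReal) * κ y z.1 ∂(Λ ω)) ∂μ)
            * ∫⁻ t in A, ∏ j, (∫⁻ z, (z.2 : ENNReal) * κ (t j) z.1 ∂(Λ ω))
                ∂(Measure.pi fun _ : Fin k => μ)) * G (Λ ω) ∂P)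
    -- (b) Poisson exponential-moment formula for `Λ`
    (hb : PoissonExpMoment P Λ ν) :
    ∀ A : Set (Fin k → X), MeasurableSet A →
      ∫⁻ ω, (if Φ ω Set.univ = (k : ENNReal)
          then ((Measure.pi fun _ : Fin k => Φ ω).restrict (distinctTuples X k)) A
          else 0) ∂P
        = ∫⁻ t in A,
            expNeg (∫⁻ z, (1 - expNeg (z.2 : ENNReal)) ∂ν)
              * ∑ pt : Finpartition (Finset.univ : Finset (Fin k)),
                  ∏ J ∈ pt.parts,
                    ∫⁻ z, expNeg (z.2 : ENNReal) * (z.2 : ENNReal) ^ J.card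
                      * ∏ j ∈ J, κ (t j) z.1 ∂ν
          ∂(Measure.pi fun _ : Fin k => μ) := by
  intro A hA
  set K := spanningPart hΛmeas ν
  have hKΛ : ∀ᵐ ω ∂P, K ω = Λ ω := by
    filter_upwards [ae_all_iff.2 fun n => ae_measure_ne_top_of_laplace hΛmeas hΛ
      (measurableSet_spanningSets ν n) (measure_spanningSets_lt_top ν n).ne] with ω hω
    exact spanningPart_apply hΛmeas ν hω
  have hγ : Measurable fun z : X × NNReal => (z.2 : ENNReal) := by fun_prop
  calc _ = ∫⁻ ω, expNeg (∫⁻ y, (∫⁻ z, (z.2 : ENNReal) * κ y z.1 ∂(Λ ω)) ∂μ)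
            * ∫⁻ t in A, ∏ j, (∫⁻ z, (z.2 : ENNReal) * κ (t j) z.1 ∂(Λ ω))
                ∂(Measure.pi fun _ : Fin k => μ) ∂P := by
        simpa using ha A hA (fun _ => 1) measurable_const
    _ = ∫⁻ ω, ∫⁻ t in A, expNeg (∫⁻ z, (z.2 : ENNReal) ∂(K ω))
            * ∏ j, ∫⁻ z, (z.2 : ENNReal) * κ (t j) z.1 ∂(K ω)
                ∂(Measure.pi fun _ : Fin k => μ) ∂P := by
        refine lintegral_congr_ae ?_
        filter_upwards [hKΛ] with ω hω
        rw [← hω, lintegral_lintegral_mul_of_lintegral_eq_one hκ hκ1 hγ,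
          lintegral_const_mul _ (by fun_prop)]
    _ = _ := by
        rw [lintegral_lintegral_swap
          (measurable_expNeg_mul_prod_lintegral K hγ (c := fun y z => (z.2 : ENNReal) * κ y z.1)
            (by fun_prop) k).aemeasurable]
        refine lintegral_congr fun t => ?_
        have hbt := hb k hk _ hγ (fun j z => (z.2 : ENNReal) * κ (t j) z.1) fun j => by fun_prop
        rw [lintegral_congr_ae (hKΛ.mono fun ω hω => by rw [hω]), hbt]
        simp only [Finset.prod_mul_distrib, Finset.prod_const, mul_assoc]

/-- Janossy density of a shot-noise Cox process.
Under the conditional Janossy formula (a) and the Poisson exponential-moment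
formula (b) for `Λ`, the `k`-th Janossy measure of `Φ` has density
`j_k(x₁,…,x_k) = e^{−∫(1−e^{−γ})dν} Σ_𝒫 ∏_{J∈𝒫} ∫ e^{−γ} γ^{|J|} ∏_{j∈J} κ(xⱼ;θ) dν`
with respect to `μ^{⊗k}`. -/
theorem sncp_janossy_density
    {Ω X : Type*} [MeasurableSpace Ω] [MeasurableSpace X]
    (P : Measure Ω) [IsProbabilityMeasure P]
    (μ : Measure X) [SigmaFinite μ]
    (ν : Measure (X × NNReal)) [SigmaFinite ν] (hν0 : ν {z | z.2 = 0} = 0)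
    (κ : X → X → ENNReal) (hκ : Measurable (Function.uncurry κ))
    (hκ1 : ∀ θ : X, ∫⁻ y, κ y θ ∂μ = 1)
    (Λ : Ω → Measure (X × NNReal)) (hΛmeas : Measurable Λ)
    (hΛ : ∀ h : X × NNReal → ENNReal, Measurable h →
      ∫⁻ ω, expNeg (∫⁻ z, h z ∂(Λ ω)) ∂P = expNeg (∫⁻ z, (1 - expNeg (h z)) ∂ν))
    (hTfin : ∀ᵐ ω ∂P, ∀ᵐ y ∂μ, (∫⁻ z, (z.2 : ENNReal) * κ y z.1 ∂(Λ ω)) ≠ ⊤)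
    (Φ : Ω → Measure X) (hΦmeas : Measurable Φ)
    (hcond : ∀ f : X → ENNReal, Measurable f →
      ∀ G : Measure (X × NNReal) → ENNReal, Measurable G →
      ∫⁻ ω, expNeg (∫⁻ y, f y ∂(Φ ω)) * G (Λ ω) ∂P
        = ∫⁻ ω, expNeg (∫⁻ y, (1 - expNeg (f y))
            * (∫⁻ z, (z.2 : ENNReal) * κ y z.1 ∂(Λ ω)) ∂μ) * G (Λ ω) ∂P)
    -- `Φ` is a simple point process with a.s. finitely many points
    (hpp : ∀ᵐ ω ∂P, ∀ B : Set X, MeasurableSet B → Φ ω B = ⊤ ∨ ∃ n : ℕ, Φ ω B = n)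
    (hsimple : ∀ᵐ ω ∂P, ∀ y : X, Φ ω {y} ≤ 1)
    (hfin : ∀ᵐ ω ∂P, Φ ω Set.univ < ⊤)
    (k : ℕ) (hk : 1 ≤ k)
    -- (a) conditional Janossy formula of a Poisson process with intensity `T_Λ·μ`
    (ha : ∀ A : Set (Fin k → X), MeasurableSet A →
      ∀ G : Measure (X × NNReal) → ENNReal, Measurable G →
      ∫⁻ ω, (if Φ ω Set.univ = (k : ENNReal)
          then ((Measure.pi fun _ : Fin k => Φ ω).restrict (distinctTuples X k)) A
          else 0) * G (Λ ω) ∂P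
        = ∫⁻ ω, (expNeg (∫⁻ y, (∫⁻ z, (z.2 : ENNReal) * κ y z.1 ∂(Λ ω)) ∂μ)
            * ∫⁻ t in A, ∏ j, (∫⁻ z, (z.2 : ENNReal) * κ (t j) z.1 ∂(Λ ω))
                ∂(Measure.pi fun _ : Fin k => μ)) * G (Λ ω) ∂P)
    -- (b) Poisson exponential-moment formula for `Λ`
    (hb : PoissonExpMoment P Λ ν) :
    ∀ A : Set (Fin k → X), MeasurableSet A →
      ∫⁻ ω, (if Φ ω Set.univ = (k : ENNReal)
          then ((Measure.pi fun _ : Fin k => Φ ω).restrict (distinctTuples X k)) A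
          else 0) ∂P
        = ∫⁻ t in A,
            expNeg (∫⁻ z, (1 - expNeg (z.2 : ENNReal)) ∂ν)
              * ∑ pt : Finpartition (Finset.univ : Finset (Fin k)),
                  ∏ J ∈ pt.parts,
                    ∫⁻ z, expNeg (z.2 : ENNReal) * (z.2 : ENNReal) ^ J.card
                      * ∏ j ∈ J, κ (t j) z.1 ∂ν
          ∂(Measure.pi fun _ : Fin k => μ) :=
  sncp_janossy_density_general P μ ν κ hκ hκ1 Λ hΛmeas hΛ Φ k hk ha hb
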